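/- Let A be a Banach algebra. If A** (with the first Arens product) has a left unit element e'' that belongs to the left weak topological center Z̃₁ℓ(A**), then A is a reflexive Banach space. -/

import Mathlib

/-! Since `e''` is a left unit, left multiplication by `e''` is the identity of `A**`, so the
hypothesis makes every functional on `A**` weak*-continuous, i.e. evaluation at a point of `A*`.
A functional on `A**` that vanishes on the canonical image of `A` is then evaluation at `0`.
That image is closed (the embedding is isometric and `A` is complete), so by Hahn–Banach it is
all of `A**`. -/

open NormedSpace Filter Topology

noncomputable section

/-- The topological dual of a seminormed space `E` (the former Mathlib `NormedSpace.Dual`). -/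
abbrev NormedSpace.Dual (𝕜 : Type*) [NontriviallyNormedField 𝕜] (E : Type*)
    [SeminormedAddCommGroup E] [NormedSpace 𝕜 E] : Type _ := E →L[𝕜] 𝕜

/-- The Arens adjoint of a bounded bilinear map `m : X × Y → Z`:
`⟨adjB m z' x, y⟩ = ⟨z', m x y⟩`. -/
def adjB {X Y Z : Type*} [NormedAddCommGroup X] [NormedSpace ℂ X]
    [NormedAddCommGroup Y] [NormedSpace ℂ Y] [NormedAddCommGroup Z] [NormedSpace ℂ Z]
    (m : X →L[ℂ] Y →L[ℂ] Z) : Dual ℂ Z →L[ℂ] X →L[ℂ] Dual ℂ Y :=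
  ((ContinuousLinearMap.compL ℂ X (Y →L[ℂ] Z) (Y →L[ℂ] ℂ)).flip m).comp
    (ContinuousLinearMap.compL ℂ Y Z ℂ)

variable (A : Type*) [NonUnitalNormedRing A] [NormedSpace ℂ A]
  [SMulCommClass ℂ A A] [IsScalarTower ℂ A A] [CompleteSpace A]

/-- The first Arens product on the bidual `A**`, obtained by the usual three-step
construction: `(a'·a)(b) = a'(ab)`, `(a''·a')(a) = a''(a'·a)`, `(a''b'')(a') = a''(b''·a')`. -/
def arens : Dual ℂ (Dual ℂ A) →L[ℂ] Dual ℂ (Dual ℂ A) →L[ℂ] Dual ℂ (Dual ℂ A) :=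
  adjB (adjB (adjB (ContinuousLinearMap.mul ℂ A)))

/-- The left weak topological center `Z̃₁ℓ(A**)`:
those `a''` for which `b'' ↦ a''b''` is weak*-to-weak continuous on `A**`. -/
def wkCenterL : Set (Dual ℂ (Dual ℂ A)) :=
  {a'' | Continuous fun b'' : WeakDual ℂ (Dual ℂ A) =>
      (arens A a'' b'' : WeakSpace ℂ (Dual ℂ (Dual ℂ A)))}

/-- The right weak topological center `Z̃₁ʳ(A**)`:
those `a''` for which `b'' ↦ b''a''` is weak*-to-weak continuous on `A**`. -/
def wkCenterR : Set (Dual ℂ (Dual ℂ A)) :=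
  {a'' | Continuous fun b'' : WeakDual ℂ (Dual ℂ A) =>
      (arens A b'' a'' : WeakSpace ℂ (Dual ℂ (Dual ℂ A)))}

/-- The topological center `Z₁(A**)`:
those `a''` for which `b'' ↦ a''b''` is weak*-to-weak* continuous on `A**`. -/
def topCenterL : Set (Dual ℂ (Dual ℂ A)) :=
  {a'' | Continuous fun b'' : WeakDual ℂ (Dual ℂ A) =>
      (arens A a'' b'' : WeakDual ℂ (Dual ℂ A))}

theorem StrongDual.exists_eq_apply_of_continuous_weakDual {𝕜 E : Type*}
    [NontriviallyNormedField 𝕜] [NormedAddCommGroup E] [NormedSpace 𝕜 E]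
    (Φ : StrongDual 𝕜 (StrongDual 𝕜 E)) (hΦ : Continuous fun x : WeakDual 𝕜 E => Φ x) :
    ∃ y : E, ∀ x : StrongDual 𝕜 E, Φ x = x y := by
  obtain ⟨y, hy⟩ := LinearMap.dualEmbedding_surjective (topDualPairing 𝕜 E)
    (⟨Φ.toLinearMap, hΦ⟩ : StrongDual 𝕜 (WeakDual 𝕜 E))
  exact ⟨y, fun x => (DFunLike.congr_fun hy x).symm⟩

theorem Submodule.exists_dual_ne_zero_forall_mem_eq_zero_of_isClosed {𝕜 E : Type*} [RCLike 𝕜]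
    [NormedAddCommGroup E] [NormedSpace 𝕜 E] {S : Submodule 𝕜 E} (hS : IsClosed (S : Set E))
    {x : E} (hx : x ∉ S) : ∃ f : StrongDual 𝕜 E, f x ≠ 0 ∧ ∀ y ∈ S, f y = 0 := by
  have : IsClosed (S : Set E) := hS -- makes `E ⧸ S` a normed space
  obtain ⟨g, hg⟩ := SeparatingDual.exists_ne_zero (R := 𝕜)
    (mt (Submodule.Quotient.mk_eq_zero S).mp hx)
  refine ⟨g.comp S.mkQL, hg, fun y hy => ?_⟩
  simp [(Submodule.Quotient.mk_eq_zero S).mpr hy]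

theorem LinearIsometry.surjective_of_forall_dual_eq_zero {𝕜 E F : Type*} [RCLike 𝕜]
    [NormedAddCommGroup E] [NormedSpace 𝕜 E] [CompleteSpace E]
    [NormedAddCommGroup F] [NormedSpace 𝕜 F] (f : E →ₗᵢ[𝕜] F)
    (h : ∀ Φ : StrongDual 𝕜 F, (∀ x, Φ (f x) = 0) → Φ = 0) :
    Function.Surjective f := by
  intro y
  by_contra hy
  obtain ⟨Φ, hΦy, hΦf⟩ := Submodule.exists_dual_ne_zero_forall_mem_eq_zero_of_isClosed
    (S := LinearMap.range f.toLinearMap)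
    f.isometry.isUniformInducing.isComplete_range.isClosed hy
  exact hΦy (DFunLike.congr_fun (h Φ fun x => hΦf _ ⟨x, rfl⟩) y)

theorem NormedSpace.surjective_inclusionInDoubleDual_of_forall_continuous_weakDual
    {𝕜 E : Type*} [RCLike 𝕜] [NormedAddCommGroup E] [NormedSpace 𝕜 E] [CompleteSpace E]
    (h : ∀ Φ : StrongDual 𝕜 (StrongDual 𝕜 (StrongDual 𝕜 E)),
      Continuous fun x : WeakDual 𝕜 (StrongDual 𝕜 E) => Φ x) :
    Function.Surjective (inclusionInDoubleDual 𝕜 E) := by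
  refine LinearIsometry.surjective_of_forall_dual_eq_zero (𝕜 := 𝕜) (E := E)
    (F := StrongDual 𝕜 (StrongDual 𝕜 E)) (inclusionInDoubleDualLi 𝕜) fun Φ hΦ => ?_
  obtain ⟨f, hf⟩ := StrongDual.exists_eq_apply_of_continuous_weakDual Φ (h Φ)
  have hf0 : f = 0 := ContinuousLinearMap.ext fun x => (hf _).symm.trans (hΦ x)
  ext x
  simp [hf, hf0]

/-- if `A**` (first Arens product) has a left unit belonging to `Z̃₁ℓ(A**)`,
then `A` is reflexive (the canonical embedding `A → A**` is surjective). -/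
theorem stmt15
    (h : ∃ e'' : Dual ℂ (Dual ℂ A),
      (∀ a'' : Dual ℂ (Dual ℂ A), arens A e'' a'' = a'') ∧ e'' ∈ wkCenterL A) :
    Function.Surjective (inclusionInDoubleDual ℂ A) := by
  obtain ⟨e'', hunit, hcenter⟩ := h
  refine surjective_inclusionInDoubleDual_of_forall_continuous_weakDual fun Φ => ?_
  exact (Φ.continuous.comp hcenter).congr fun b'' => congrArg Φ (hunit b'')

end
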